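/- arXiv:2004.03239 — 11 statements merged into one kernel-verified Lean document; each statement's English description precedes it below -/
import Mathlib

section
/- Suppose k is a field with k ≠ F₂ (the two-element field). If the k-hull k((F)) is an additive subgroup of the Hahn series field k((G)), then F satisfies (S2) closure under subsets, (S3) closure under finite unions, and (S5) nonemptiness. -/
open scoped Pointwise

/-- Suppose `k` is a field with `k ≠ 𝔽₂`, i.e. `k` has an element different
from `0` and `1`. If the `k`-hull `k((F))` is an additive subgroup of the Hahn series field
`k((G))`, then `F` satisfies (S2) closure under subsets, (S3) closure under finite unions,
and (S5) nonemptiness. -/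
theorem addSubgroup_khull_necessary
    {G : Type*} [AddCommGroup G] [LinearOrder G] [IsOrderedAddMonoid G] {k : Type*} [Field k]
    (hk : ∃ x : k, x ≠ 0 ∧ x ≠ 1)
    (F : Set (Set G)) (hWF : ∀ A ∈ F, A.IsWF)
    (H : AddSubgroup (HahnSeries G k))
    (hH : (H : Set (HahnSeries G k)) = {a : HahnSeries G k | a.support ∈ F}) :
    (∀ A ∈ F, ∀ B ⊆ A, B ∈ F) ∧ (∀ A ∈ F, ∀ B ∈ F, A ∪ B ∈ F) ∧ F.Nonempty := by
  classical
  have hmem : ∀ a : HahnSeries G k, a ∈ H ↔ a.support ∈ F := by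
    intro a
    rw [← SetLike.mem_coe, hH]
    rfl
  obtain ⟨x, hx0, hx1⟩ := hk
  -- helper: build a Hahn series supported inside a WF set
  have mk : ∀ (A : Set G), A.IsWF → ∀ (f : G → k),
      ∃ a : HahnSeries G k, a.coeff = fun g => if g ∈ A then f g else 0 := by
    intro A hA f
    refine ⟨⟨fun g => if g ∈ A then f g else 0, ?_⟩, rfl⟩
    apply hA.isPWO.mono
    intro g hg
    by_contra h
    simp [h] at hg
  refine ⟨?_, ?_, ?_⟩
  · -- (S2) closure under subsets
    intro A hA B hBA
    have hAWF := hWF A hA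
    obtain ⟨a, ha⟩ := mk A hAWF (fun _ => 1)
    obtain ⟨c, hc⟩ := mk A hAWF (fun g => if g ∈ B then x else 1)
    have hasupp : a.support = A := by
      ext g
      simp only [HahnSeries.support, Function.mem_support, ha]
      split <;> simp_all
    have hcsupp : c.support = A := by
      ext g
      simp only [HahnSeries.support, Function.mem_support, hc]
      split
      · split <;> simp_all
      · simp_all
    have haH : a ∈ H := (hmem a).2 (hasupp ▸ hA)
    have hcH : c ∈ H := (hmem c).2 (hcsupp ▸ hA)
    have hsubH : a - c ∈ H := sub_mem haH hcH
    have hsupp : (a - c).support = B := by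
      ext g
      simp only [HahnSeries.support, Function.mem_support, HahnSeries.coeff_sub, Pi.sub_apply,
        ha, hc]
      by_cases hgB : g ∈ B
      · have hgA : g ∈ A := hBA hgB
        simp [hgA, hgB, sub_ne_zero.2 (Ne.symm hx1), hgB]
      · by_cases hgA : g ∈ A <;> simp [hgA, hgB]
    exact hsupp ▸ (hmem _).1 hsubH
  · -- (S3) closure under finite unions
    intro A hA B hB
    set y : k := if 1 + x = 0 then 1 else x with hy
    have hy0 : y ≠ 0 := by
      rw [hy]; split
      · exact one_ne_zero
      · exact hx0
    have hy1 : (1 : k) + y ≠ 0 := by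
      rw [hy]; split
      · rename_i h
        have h2 : x = -1 := by linear_combination h
        have : (2 : k) ≠ 0 := by
          intro h20
          apply hx1
          have : (1 : k) = -1 := by linear_combination h20
          rw [h2, ← this]
        intro h11
        exact this (by linear_combination h11)
      · assumption
    obtain ⟨a, ha⟩ := mk A (hWF A hA) (fun _ => 1)
    obtain ⟨b, hb⟩ := mk B (hWF B hB) (fun _ => y)
    have hasupp : a.support = A := by
      ext g
      simp only [HahnSeries.support, Function.mem_support, ha]
      split <;> simp_all
    have hbsupp : b.support = B := by
      ext g
      simp only [HahnSeries.support, Function.mem_support, hb]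
      split <;> simp_all
    have haH : a ∈ H := (hmem a).2 (hasupp ▸ hA)
    have hbH : b ∈ H := (hmem b).2 (hbsupp ▸ hB)
    have hsumH : a + b ∈ H := add_mem haH hbH
    have hsupp : (a + b).support = A ∪ B := by
      ext g
      simp only [HahnSeries.support, Function.mem_support, HahnSeries.coeff_add, ha, hb,
        Set.mem_union]
      by_cases hgA : g ∈ A <;> by_cases hgB : g ∈ B <;>
        simp [hgA, hgB, hy0, hy1]
    exact hsupp ▸ (hmem _).1 hsumH
  · -- (S5) nonemptiness
    refine ⟨∅, ?_⟩
    have h0 : (0 : HahnSeries G k) ∈ H := zero_mem H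
    have : (0 : HahnSeries G k).support = ∅ := HahnSeries.support_zero
    exact this ▸ (hmem _).1 h0
end

section
/- Suppose k ≠ F₂ and the k-hull k((F)) is an additive subgroup of k((G)). Then k((F)) is truncation closed: for every a ∈ k((F)) and every initial segment B of supp(a), the series obtained by restricting a to B lies in k((F)). -/
/-- The restriction of a Hahn series `a` to a subset `B` of the exponents:
the coefficient at `h` is `a.coeff h` if `h ∈ B` and `0` otherwise. -/
noncomputable def HahnSeries.restrictSet {G : Type*} [PartialOrder G] {k : Type*} [Zero k]
    (a : HahnSeries G k) (B : Set G) : HahnSeries G k :=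
  ⟨B.indicator a.coeff, a.isPWO_support'.mono (by
    rw [Set.support_indicator]; exact Set.inter_subset_right)⟩

lemma HahnSeries.restrictSet_coeff {G : Type*} [PartialOrder G] {k : Type*} [Zero k]
    (a : HahnSeries G k) (B : Set G) (g : G) :
    (a.restrictSet B).coeff g = B.indicator a.coeff g := rfl

/-- Suppose `k ≠ 𝔽₂` (it has an element different from `0` and `1`) and the
`k`-hull `k((F))` is an additive subgroup of `k((G))`. Then `k((F))` is truncation closed:
for every `a ∈ k((F))` and every initial segment `B` of `supp a`, the restriction of `a`
to `B` lies in `k((F))`. -/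
theorem khull_addSubgroup_truncation_closed
    {G : Type*} [AddCommGroup G] [LinearOrder G] [IsOrderedAddMonoid G] {k : Type*} [Field k]
    (hk : ∃ x : k, x ≠ 0 ∧ x ≠ 1)
    (F : Set (Set G)) (hWF : ∀ A ∈ F, A.IsWF)
    (H : AddSubgroup (HahnSeries G k))
    (hH : (H : Set (HahnSeries G k)) = {a : HahnSeries G k | a.support ∈ F}) :
    ∀ a : HahnSeries G k, a.support ∈ F →
      ∀ B ⊆ a.support, (∀ b ∈ B, ∀ x ∈ a.support, x ≤ b → x ∈ B) →
        a.restrictSet B ∈ {a : HahnSeries G k | a.support ∈ F} := by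
  intro a ha B hB _hinit
  obtain ⟨x, hx0, hx1⟩ := hk
  set r := a.restrictSet B with hr
  set b := a + (x - 1) • r with hb
  have hbsupp : b.support = a.support := by
    ext g
    simp only [HahnSeries.mem_support, hb, HahnSeries.coeff_add, HahnSeries.coeff_smul,
      smul_eq_mul]
    by_cases hg : g ∈ B
    · rw [hr, HahnSeries.restrictSet_coeff, Set.indicator_of_mem hg]
      constructor
      · intro h h0
        apply h; rw [h0]; ring
      · intro h
        have he : a.coeff g + (x - 1) * a.coeff g = x * a.coeff g := by ring
        rw [he]
        exact mul_ne_zero hx0 h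
    · rw [hr, HahnSeries.restrictSet_coeff, Set.indicator_of_notMem hg]
      simp
  have haH : a ∈ H := by rw [← SetLike.mem_coe, hH]; exact ha
  have hbH : b ∈ H := by rw [← SetLike.mem_coe, hH]; simpa [hbsupp] using ha
  have hsub : a - b ∈ H := sub_mem haH hbH
  rw [← SetLike.mem_coe, hH] at hsub
  have hss : (a - b).support = r.support := by
    ext g
    simp only [HahnSeries.mem_support, HahnSeries.coeff_sub, hb, HahnSeries.coeff_add,
      HahnSeries.coeff_smul, smul_eq_mul]
    have he : a.coeff g - (a.coeff g + (x - 1) * r.coeff g) = -((x - 1) * r.coeff g) := by ring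
    rw [he, neg_ne_zero]
    constructor
    · intro h
      exact fun h0 => h (by rw [h0, mul_zero])
    · intro h
      exact mul_ne_zero (sub_ne_zero.mpr hx1) h
  show r.support ∈ F
  rw [← hss]
  exact hsub
end

section
/- In the Hahn series field F₂((ℤ)) over the two-element field, the element t² does not belong to the subfield F₂(s) generated by s = t² + t³. Consequently, the subfield F₂(s) of F₂((ℤ)) is not truncation closed. -/
/-- The truncation of a Hahn series `a` at exponent `g`: keep only coefficients at
exponents strictly less than `g`. -/
noncomputable def HahnSeries.truncLT' {G : Type*} [LinearOrder G] {k : Type*} [Zero k]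
    (a : HahnSeries G k) (g : G) : HahnSeries G k :=
  ⟨Set.indicator {h | h < g} a.coeff, a.isPWO_support'.mono (by
    rw [Set.support_indicator]; exact Set.inter_subset_right)⟩

open Polynomial HahnSeries

/-- The embedding of `𝔽₂[X]` into `𝔽₂((ℤ))` sending `X` to `t`. -/
noncomputable abbrev psi2 : (ZMod 2)[X] →+* HahnSeries ℤ (ZMod 2) :=
  algebraMap ((ZMod 2)[X]) (HahnSeries ℤ (ZMod 2))

lemma psi2_X : psi2 X = HahnSeries.single (1:ℤ) (1 : ZMod 2) := by
  simp [psi2, Polynomial.algebraMap_hahnSeries_apply, Polynomial.coe_X,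
    HahnSeries.ofPowerSeries_X]

lemma psi2_X_sq : psi2 (X^2) = HahnSeries.single (2:ℤ) (1 : ZMod 2) := by
  rw [map_pow]
  simp [psi2, Polynomial.algebraMap_hahnSeries_apply, Polynomial.coe_X,
    HahnSeries.ofPowerSeries_X]

lemma psi2_u : psi2 (X^2 + X^3) = HahnSeries.single (2:ℤ) (1 : ZMod 2) +
    HahnSeries.single (3:ℤ) (1 : ZMod 2) := by
  rw [map_add, map_pow, map_pow]
  simp [psi2, Polynomial.algebraMap_hahnSeries_apply, Polynomial.coe_X,
    HahnSeries.ofPowerSeries_X]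

lemma psi2_inj : Function.Injective psi2 :=
  Polynomial.algebraMap_hahnSeries_injective ℤ

/-- Every element of the subring generated by `s = ψ(u)` is `ψ(P ∘ u)` for some `P`. -/
lemma mem_subring_closure (x : HahnSeries ℤ (ZMod 2))
    (hx : x ∈ Subring.closure {psi2 (X^2 + X^3)}) :
    ∃ P : (ZMod 2)[X], x = psi2 (P.comp (X^2 + X^3)) := by
  induction hx using Subring.closure_induction with
  | mem y hy =>
      exact ⟨X, by simp only [Set.mem_singleton_iff] at hy; simp [hy]⟩
  | zero => exact ⟨0, by simp⟩
  | one => exact ⟨1, by simp⟩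
  | add a b ha hb iha ihb =>
      obtain ⟨P, hP⟩ := iha; obtain ⟨Q, hQ⟩ := ihb
      exact ⟨P + Q, by rw [hP, hQ, add_comp, map_add]⟩
  | neg a ha iha =>
      obtain ⟨P, hP⟩ := iha
      exact ⟨-P, by rw [hP, neg_comp, map_neg]⟩
  | mul a b ha hb iha ihb =>
      obtain ⟨P, hP⟩ := iha; obtain ⟨Q, hQ⟩ := ihb
      exact ⟨P * Q, by rw [hP, hQ, mul_comp, map_mul]⟩

/-- The key degree argument: `X² · Q(u) ≠ P(u)` for `u = X² + X³` when `Q ≠ 0`. -/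
lemma key_poly (P Q : (ZMod 2)[X]) (hQ : Q ≠ 0) :
    X^2 * Q.comp (X^2 + X^3) ≠ P.comp (X^2 + X^3) := by
  have hu : (X^2 + X^3 : (ZMod 2)[X]).natDegree = 3 := by
    compute_degree!
  intro h
  have hQu : Q.comp (X^2 + X^3) ≠ 0 := by
    intro h0
    rw [comp_eq_zero_iff] at h0
    rcases h0 with h0 | ⟨h0, h1⟩
    · exact hQ h0
    · rw [h1] at hu; simp at hu
  have hdeg := congrArg natDegree h
  rw [natDegree_mul (by exact pow_ne_zero 2 X_ne_zero) hQu, natDegree_comp,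
    natDegree_comp, natDegree_X_pow, hu] at hdeg
  omega

lemma t_sq_not_mem :
    HahnSeries.single (2 : ℤ) (1 : ZMod 2) ∉
      Subfield.closure {HahnSeries.single (2 : ℤ) (1 : ZMod 2) +
        HahnSeries.single (3 : ℤ) (1 : ZMod 2)} := by
  intro hmem
  rw [Subfield.mem_closure_iff] at hmem
  obtain ⟨y, hy, z, hz, hyz⟩ := hmem
  rw [← psi2_u] at hy hz
  obtain ⟨P, rfl⟩ := mem_subring_closure y hy
  obtain ⟨Q, rfl⟩ := mem_subring_closure z hz
  have ht2 : (HahnSeries.single (2 : ℤ) (1 : ZMod 2)) ≠ 0 :=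
    HahnSeries.single_ne_zero one_ne_zero
  by_cases hz0 : psi2 (Q.comp (X^2 + X^3)) = 0
  · rw [hz0, div_zero] at hyz
    exact ht2 hyz.symm
  · have hQ : Q ≠ 0 := by
      intro h; apply hz0; rw [h, zero_comp, map_zero]
    rw [div_eq_iff hz0, ← psi2_X_sq, ← map_mul] at hyz
    have := psi2_inj hyz.symm
    exact key_poly P Q hQ this

lemma trunc_s : (HahnSeries.single (2 : ℤ) (1 : ZMod 2) +
      HahnSeries.single (3 : ℤ) (1 : ZMod 2)).truncLT' 3 =
    HahnSeries.single (2 : ℤ) (1 : ZMod 2) := by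
  ext h
  show Set.indicator {h : ℤ | h < 3} _ h = _
  rcases lt_or_ge h 3 with hh | hh
  · rw [Set.indicator_of_mem (show h ∈ {h : ℤ | h < 3} from hh)]
    rw [HahnSeries.coeff_add]
    rcases eq_or_ne h 2 with rfl | h2
    · simp
    · rw [HahnSeries.coeff_single_of_ne h2,
        HahnSeries.coeff_single_of_ne (show h ≠ 3 by omega), add_zero]
  · rw [Set.indicator_of_notMem (by simpa using hh),
      HahnSeries.coeff_single_of_ne (by omega)]

/-- In the Hahn series field `𝔽₂((ℤ))`, the element `t²` does not belong
to the subfield `𝔽₂(s)` generated by `s = t² + t³`. Consequently, the subfield `𝔽₂(s)` of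
`𝔽₂((ℤ))` is not truncation closed. -/
theorem t_sq_not_mem_gen_subfield :
    (HahnSeries.single (2 : ℤ) (1 : ZMod 2) ∉
      Subfield.closure {HahnSeries.single (2 : ℤ) (1 : ZMod 2) +
        HahnSeries.single (3 : ℤ) (1 : ZMod 2)}) ∧
    ¬ (∀ a ∈ Subfield.closure {HahnSeries.single (2 : ℤ) (1 : ZMod 2) +
          HahnSeries.single (3 : ℤ) (1 : ZMod 2)}, ∀ g : ℤ,
        a.truncLT' g ∈ Subfield.closure {HahnSeries.single (2 : ℤ) (1 : ZMod 2) +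
          HahnSeries.single (3 : ℤ) (1 : ZMod 2)}) := by
  refine ⟨t_sq_not_mem, fun h => t_sq_not_mem ?_⟩
  have := h _ (Subfield.subset_closure rfl) 3
  rwa [trunc_s] at this
end

section
/- Suppose char(k) = 0. Then the k-hull k((F)) is a subring (possibly without identity) of k((G)) if and only if F satisfies (S2) closure under subsets, (S3) closure under finite unions, (S5) nonemptiness, and (A2) closure under sumsets A ⊕ B. -/
/-!
Every `A ∈ F` is the support of the indicator series `1_A`. In characteristic `0` the
coefficients of `1_A + 2 • 1_B` never cancel, so its support is `A ∪ B`; for `B ⊆ A` the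
series `1_B + 1_A` has support `A`, which recovers `1_B = (1_B + 1_A) - 1_A`; and the
coefficient of `1_A * 1_B` at `g` is the number of ways of writing `g = a + b` with `a ∈ A`,
`b ∈ B`, so its support is `A + B`. Conversely the support of a sum, a negative or a product
lies in the union, the same set or the sumset of the supports.
-/

open scoped Pointwise

namespace HahnSeries

variable {Γ R : Type*}

section Indicator

variable [PartialOrder Γ] {A B : Set Γ}

noncomputable def indicator [Zero R] (A : Set Γ) (hA : A.IsPWO) (c : R) : HahnSeries Γ R where
  coeff := A.indicator fun _ => c
  isPWO_support' := hA.mono Set.support_indicator_subset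

@[simp]
theorem coeff_indicator [Zero R] (hA : A.IsPWO) (c : R) :
    (indicator A hA c).coeff = A.indicator fun _ => c :=
  rfl

theorem support_indicator [Zero R] (hA : A.IsPWO) {c : R} (hc : c ≠ 0) :
    (indicator A hA c).support = A := by
  ext g
  by_cases hg : g ∈ A <;> simp [hg, hc]

theorem support_indicator_add_indicator [AddMonoid R] (hA : A.IsPWO) (hB : B.IsPWO) {c d : R}
    (hc : c ≠ 0) (hd : d ≠ 0) (hcd : c + d ≠ 0) :
    (indicator A hA c + indicator B hB d).support = A ∪ B := by
  ext g
  by_cases hgA : g ∈ A <;> by_cases hgB : g ∈ B <;> simp [hgA, hgB, hc, hd, hcd]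

theorem support_indicator_one_mul_indicator_one [AddCommMonoid Γ] [IsOrderedCancelAddMonoid Γ]
    [Semiring R] [CharZero R] (hA : A.IsPWO) (hB : B.IsPWO) :
    (indicator A hA (1 : R) * indicator B hB 1).support = A + B := by
  set x := indicator A hA (1 : R)
  set y := indicator B hB (1 : R)
  have hx : x.support = A := support_indicator hA one_ne_zero
  have hy : y.support = B := support_indicator hB one_ne_zero
  ext g
  have coeff_eq_card :
      (x * y).coeff g = (Finset.antidiagonal x.isPWO_support y.isPWO_support g).card := by
    rw [coeff_mul, Finset.card_eq_sum_ones, Nat.cast_sum, Nat.cast_one]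
    refine Finset.sum_congr rfl fun ij hij => ?_
    rw [Finset.mem_antidiagonal, hx, hy] at hij
    simp [x, y, hij.1, hij.2.1]
  rw [mem_support, coeff_eq_card, Nat.cast_ne_zero, Finset.card_ne_zero, Set.mem_add]
  constructor
  · rintro ⟨⟨a, b⟩, hab⟩
    rw [Finset.mem_antidiagonal, hx, hy] at hab
    exact ⟨a, hab.1, b, hab.2.1, hab.2.2⟩
  · rintro ⟨a, ha, b, hb, rfl⟩
    exact ⟨⟨a, b⟩, Finset.mem_antidiagonal.mpr ⟨hx ▸ ha, hy ▸ hb, rfl⟩⟩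

end Indicator

section Hull

variable [PartialOrder Γ] {F : Set (Set Γ)} {A B : Set Γ}

theorem union_mem_of_support_add_mem [AddMonoidWithOne R] [CharZero R]
    (hF : ∀ a b : HahnSeries Γ R, a.support ∈ F → b.support ∈ F → (a + b).support ∈ F)
    (hA : A ∈ F) (hB : B ∈ F) (hAw : A.IsPWO) (hBw : B.IsPWO) : A ∪ B ∈ F := by
  have h := hF (indicator A hAw (1 : R)) (indicator B hBw 2)
    (by rwa [support_indicator hAw one_ne_zero]) (by rwa [support_indicator hBw two_ne_zero])
  rwa [support_indicator_add_indicator hAw hBw one_ne_zero two_ne_zero (by norm_num)] at h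

theorem mem_of_subset_of_support_sub_mem [AddGroupWithOne R] [CharZero R]
    (hsub : ∀ a b : HahnSeries Γ R, a.support ∈ F → b.support ∈ F → (a - b).support ∈ F)
    (hA : A ∈ F) (hAw : A.IsPWO) (hBA : B ⊆ A) : B ∈ F := by
  set a := indicator A hAw (1 : R)
  set b := indicator B (hAw.mono hBA) (1 : R)
  have ha : a.support ∈ F := by rwa [support_indicator hAw one_ne_zero]
  have hba : (b + a).support ∈ F := by
    rwa [support_indicator_add_indicator _ hAw one_ne_zero one_ne_zero (by norm_num),
      Set.union_eq_self_of_subset_left hBA]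
  have h := hsub _ _ hba ha
  rwa [add_sub_cancel_right, support_indicator _ one_ne_zero] at h

theorem add_mem_of_support_mul_mem [AddCommMonoid Γ] [IsOrderedCancelAddMonoid Γ] [Semiring R] [CharZero R]
    (hF : ∀ a b : HahnSeries Γ R, a.support ∈ F → b.support ∈ F → (a * b).support ∈ F)
    (hA : A ∈ F) (hB : B ∈ F) (hAw : A.IsPWO) (hBw : B.IsPWO) : A + B ∈ F := by
  have h := hF (indicator A hAw (1 : R)) (indicator B hBw 1)
    (by rwa [support_indicator hAw one_ne_zero]) (by rwa [support_indicator hBw one_ne_zero])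
  rwa [support_indicator_one_mul_indicator_one] at h

variable [AddCommMonoid Γ] [IsOrderedCancelAddMonoid Γ] [Ring R]

def hullNonUnitalSubring (F : Set (Set Γ)) (hsub : ∀ A ∈ F, ∀ B ⊆ A, B ∈ F)
    (hunion : ∀ A ∈ F, ∀ B ∈ F, A ∪ B ∈ F) (hempty : ∅ ∈ F) (hadd : ∀ A ∈ F, ∀ B ∈ F, A + B ∈ F) :
    NonUnitalSubring (HahnSeries Γ R) where
  carrier := {a | a.support ∈ F}
  zero_mem' := by simpa using hempty
  add_mem' ha hb := hsub _ (hunion _ ha _ hb) _ (support_add_subset _ _)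
  neg_mem' ha := by simpa using ha
  mul_mem' ha hb := hsub _ (hadd _ ha _ hb) _ support_mul_subset

end Hull

end HahnSeries

open HahnSeries in
/-- Suppose `char k = 0`. Then the `k`-hull `k((F))` is a subring (possibly
without identity) of `k((G))` if and only if `F` satisfies (S2) closure under subsets,
(S3) closure under finite unions, (S5) nonemptiness, and (A2) closure under sumsets. -/
theorem khull_nonUnitalSubring_iff_charZero
    {G : Type*} [AddCommGroup G] [LinearOrder G] [IsOrderedAddMonoid G] {k : Type*} [Field k] [CharZero k]
    (F : Set (Set G)) (hWF : ∀ A ∈ F, A.IsWF) :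
    (∃ S : NonUnitalSubring (HahnSeries G k),
        (S : Set (HahnSeries G k)) = {a : HahnSeries G k | a.support ∈ F}) ↔
      ((∀ A ∈ F, ∀ B ⊆ A, B ∈ F) ∧ (∀ A ∈ F, ∀ B ∈ F, A ∪ B ∈ F) ∧ F.Nonempty ∧
        (∀ A ∈ F, ∀ B ∈ F, A + B ∈ F)) := by
  have hPWO (A) (hA : A ∈ F) : A.IsPWO := (hWF A hA).isPWO
  constructor
  · rintro ⟨S, hS⟩
    have mem_iff (a : HahnSeries G k) : a ∈ S ↔ a.support ∈ F := Set.ext_iff.mp hS a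
    have add_closed (a b : HahnSeries G k) (ha : a.support ∈ F) (hb : b.support ∈ F) :
        (a + b).support ∈ F :=
      (mem_iff _).1 (S.add_mem ((mem_iff a).2 ha) ((mem_iff b).2 hb))
    have sub_closed (a b : HahnSeries G k) (ha : a.support ∈ F) (hb : b.support ∈ F) :
        (a - b).support ∈ F :=
      (mem_iff _).1 (S.sub_mem ((mem_iff a).2 ha) ((mem_iff b).2 hb))
    have mul_closed (a b : HahnSeries G k) (ha : a.support ∈ F) (hb : b.support ∈ F) :
        (a * b).support ∈ F :=
      (mem_iff _).1 (S.mul_mem ((mem_iff a).2 ha) ((mem_iff b).2 hb))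
    refine ⟨fun A hA B hBA => mem_of_subset_of_support_sub_mem sub_closed hA (hPWO A hA) hBA,
      fun A hA B hB => union_mem_of_support_add_mem add_closed hA hB (hPWO A hA) (hPWO B hB),
      ⟨∅, by simpa using (mem_iff 0).1 S.zero_mem⟩,
      fun A hA B hB => add_mem_of_support_mul_mem mul_closed hA hB (hPWO A hA) (hPWO B hB)⟩
  · rintro ⟨hsub, hunion, ⟨A, hA⟩, hadd⟩
    exact ⟨hullNonUnitalSubring F hsub hunion (hsub A hA ∅ (Set.empty_subset A)) hadd, rfl⟩
end

section
/- If F satisfies (S2) closure under subsets, (S3) closure under finite unions, (S4) {0} ∈ F, (A2) closure under sumsets, (A4) A ∈ F with A ⊆ G^{≥0} implies the set of all finite sums of elements of A is in F, and (A5) {g} ∈ F implies {−g} ∈ F, then the k-hull k((F)) is a subfield of k((G)). -/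
open scoped Pointwise

/-!
For `x ≠ 0` with order `g` and leading coefficient `c`, the series
`u = 1 - single (-g) c⁻¹ * x` has positive order and `x⁻¹ = single (-g) c⁻¹ * ∑ₙ uⁿ`.
Hence `supp x⁻¹ ⊆ {-g} + ⟨supp u⟩`, where `⟨supp u⟩` is the additive monoid generated by
`supp u ⊆ {0} ∪ ({-g} + supp x)`, a set of non-negative elements; the closure properties
of `F` carry `supp x ∈ F` through each of these sets.
-/

namespace HahnSeries

theorem SummableFamily.support_hsum_powers_subset_closure {Γ R : Type*} [AddCommMonoid Γ]
    [LinearOrder Γ] [IsOrderedCancelAddMonoid Γ] [CommRing R] (x : HahnSeries Γ R) :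
    (powers x).hsum.support ⊆ AddSubmonoid.closure x.support := by
  refine support_hsum_subset.trans (Set.iUnion_subset fun n => ?_)
  refine (support_pow_subset_closure _ n).trans (AddSubmonoid.closure_mono ?_)
  split_ifs
  · exact subset_rfl
  · simp

theorem support_one_sub_single_mul_subset {Γ R : Type*} [AddCommMonoid Γ] [PartialOrder Γ]
    [IsOrderedCancelAddMonoid Γ] [Ring R] (x : HahnSeries Γ R) (g : Γ) (r : R) :
    (1 - single g r * x).support ⊆ {0} ∪ ({g} + x.support) :=
  (support_sub_subset _ _).trans <|
    Set.union_subset_union support_single_subset <|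
      support_mul_subset.trans (Set.add_subset_add_right support_single_subset)

section Field

variable {Γ K : Type*} [AddCommGroup Γ] [LinearOrder Γ] [IsOrderedAddMonoid Γ] [Field K]

theorem support_inv_subset (x : HahnSeries Γ K) :
    x⁻¹.support ⊆ {-x.order} +
      AddSubmonoid.closure (1 - single (-x.order) x.leadingCoeff⁻¹ * x).support := by
  rw [inv_def]
  exact support_mul_subset.trans <| Set.add_subset_add support_single_subset <|
    SummableFamily.support_hsum_powers_subset_closure _

theorem support_one_sub_single_neg_order_mul_subset_nonneg {x : HahnSeries Γ K} (hx : x ≠ 0) :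
    (1 - single (-x.order) x.leadingCoeff⁻¹ * x).support ⊆ {g | 0 ≤ g} := fun _ hg =>
  have hpos := unit_aux x (inv_mul_cancel₀ (leadingCoeff_ne_zero.mpr hx)) _ (neg_add_cancel _)
  WithTop.coe_le_coe.mp (hpos.le.trans (orderTop_le_of_coeff_ne_zero hg))

theorem support_inv_mem {F : Set (Set Γ)} (hS2 : ∀ A ∈ F, ∀ B ⊆ A, B ∈ F)
    (hS3 : ∀ A ∈ F, ∀ B ∈ F, A ∪ B ∈ F) (hS4 : ({0} : Set Γ) ∈ F)
    (hA2 : ∀ A ∈ F, ∀ B ∈ F, A + B ∈ F)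
    (hA4 : ∀ A ∈ F, A ⊆ {g : Γ | 0 ≤ g} → (AddSubmonoid.closure A : Set Γ) ∈ F)
    (hA5 : ∀ g : Γ, ({g} : Set Γ) ∈ F → ({-g} : Set Γ) ∈ F)
    {x : HahnSeries Γ K} (hx : x.support ∈ F) : x⁻¹.support ∈ F := by
  obtain rfl | hx0 := eq_or_ne x 0
  · simpa using hS2 _ hS4 ∅ (Set.empty_subset _)
  have hneg : ({-x.order} : Set Γ) ∈ F :=
    hA5 _ <| hS2 _ hx _ <| Set.singleton_subset_iff.mpr <| coeff_order_eq_zero.not.mpr hx0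
  have hu : (1 - single (-x.order) x.leadingCoeff⁻¹ * x).support ∈ F :=
    hS2 _ (hS3 _ hS4 _ (hA2 _ hneg _ hx)) _ (support_one_sub_single_mul_subset _ _ _)
  exact hS2 _ (hA2 _ hneg _ (hA4 _ hu (support_one_sub_single_neg_order_mul_subset_nonneg hx0)))
    _ (support_inv_subset x)

end Field

end HahnSeries

theorem khull_is_subfield_general
    {G : Type*} [AddCommGroup G] [LinearOrder G] [IsOrderedAddMonoid G] {k : Type*} [Field k]
    (F : Set (Set G))
    (hS2 : ∀ A ∈ F, ∀ B ⊆ A, B ∈ F)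
    (hS3 : ∀ A ∈ F, ∀ B ∈ F, A ∪ B ∈ F)
    (hS4 : ({0} : Set G) ∈ F)
    (hA2 : ∀ A ∈ F, ∀ B ∈ F, A + B ∈ F)
    (hA4 : ∀ A ∈ F, A ⊆ {g : G | 0 ≤ g} → (AddSubmonoid.closure A : Set G) ∈ F)
    (hA5 : ∀ g : G, ({g} : Set G) ∈ F → ({-g} : Set G) ∈ F) :
    ∃ K : Subfield (HahnSeries G k),
      (K : Set (HahnSeries G k)) = {a : HahnSeries G k | a.support ∈ F} :=
  ⟨{ carrier := {a | a.support ∈ F}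
     zero_mem' := by simpa using hS2 _ hS4 ∅ (Set.empty_subset _)
     one_mem' := hS2 _ hS4 _ HahnSeries.support_single_subset
     add_mem' := fun ha hb => hS2 _ (hS3 _ ha _ hb) _ (HahnSeries.support_add_subset _ _)
     neg_mem' := fun ha => by simpa only [Set.mem_ofPred_eq, HahnSeries.support_neg] using ha
     mul_mem' := fun ha hb => hS2 _ (hA2 _ ha _ hb) _ HahnSeries.support_mul_subset
     inv_mem' := fun _ => HahnSeries.support_inv_mem hS2 hS3 hS4 hA2 hA4 hA5 }, rfl⟩

/-- If `F` satisfies (S2) closure under subsets, (S3) closure under finite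
unions, (S4) `{0} ∈ F`, (A2) closure under sumsets, (A4) for `A ∈ F` with `A ⊆ G^{≥0}` the
set of all finite sums of elements of `A` (the additive submonoid generated by `A`) is in
`F`, and (A5) `{g} ∈ F → {-g} ∈ F`, then the `k`-hull `k((F))` is a subfield of `k((G))`. -/
theorem khull_is_subfield
    {G : Type*} [AddCommGroup G] [LinearOrder G] [IsOrderedAddMonoid G] {k : Type*} [Field k]
    (F : Set (Set G)) (hWF : ∀ A ∈ F, A.IsWF)
    (hS2 : ∀ A ∈ F, ∀ B ⊆ A, B ∈ F)
    (hS3 : ∀ A ∈ F, ∀ B ∈ F, A ∪ B ∈ F)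
    (hS4 : ({0} : Set G) ∈ F)
    (hA2 : ∀ A ∈ F, ∀ B ∈ F, A + B ∈ F)
    (hA4 : ∀ A ∈ F, A ⊆ {g : G | 0 ≤ g} → (AddSubmonoid.closure A : Set G) ∈ F)
    (hA5 : ∀ g : G, ({g} : Set G) ∈ F → ({-g} : Set G) ∈ F) :
    ∃ K : Subfield (HahnSeries G k),
      (K : Set (HahnSeries G k)) = {a : HahnSeries G k | a.support ∈ F} :=
  khull_is_subfield_general F hS2 hS3 hS4 hA2 hA4 hA5
end

section
/- Let b ∈ k((G)) be nonzero with g₀ = min supp(b). Then supp(b⁻¹) ⊆ (⨁_{n∈ℕ} ((supp(b) − g₀) \ {0})) − g₀, where ⨁_{n∈ℕ} S denotes the set of all finite sums of elements of S (including the empty sum 0). -/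
open scoped Pointwise

/-- Let `b ∈ k((G))` be nonzero and let `g₀ = min (supp b)`. Then
`supp (b⁻¹) ⊆ (⨁_{n∈ℕ} ((supp b − g₀) \ {0})) − g₀`, where the set of all finite sums of
elements of a set `S` (including the empty sum `0`) is the additive submonoid generated
by `S`, and `S − g` denotes the translate `{s − g : s ∈ S}`. -/
theorem support_inv_subset
    {G : Type*} [AddCommGroup G] [LinearOrder G] [IsOrderedAddMonoid G] {k : Type*} [Field k]
    (b : HahnSeries G k) (hb : b ≠ 0) (g₀ : G)
    (hg₀ : g₀ ∈ b.support) (hmin : ∀ h ∈ b.support, g₀ ≤ h) :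
    (b⁻¹).support ⊆ (fun x => x - g₀) ''
      (AddSubmonoid.closure (((fun x => x - g₀) '' b.support) \ {0}) : Set G) := by
  classical
  have hlc : b.leadingCoeff ≠ 0 := HahnSeries.leadingCoeff_ne_zero.mpr hb
  have horder : b.order = g₀ :=
    le_antisymm (HahnSeries.order_le_of_coeff_ne_zero hg₀)
      (hmin _ (HahnSeries.coeff_order_eq_zero.not.mpr hb))
  set r : k := b.leadingCoeff⁻¹ with hr
  set y : HahnSeries G k := 1 - HahnSeries.single (-b.order) r * b with hy
  have hyo : 0 < y.orderTop := HahnSeries.unit_aux b (inv_mul_cancel₀ hlc) _ (neg_add_cancel b.order)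
  set S : Set G := ((fun x => x - g₀) '' b.support) \ {0} with hS
  -- support of y is contained in S
  have hysupp : y.support ⊆ S := by
    intro g hg
    have hgcoeff : y.coeff g ≠ 0 := hg
    have hgpos : (0 : G) < g := by
      have := HahnSeries.orderTop_le_of_coeff_ne_zero hgcoeff
      exact_mod_cast lt_of_lt_of_le hyo this
    have hbco : b.coeff (b.order + g) ≠ 0 := by
      intro h
      apply hgcoeff
      have : (HahnSeries.single (-b.order) r * b).coeff g = r * b.coeff (b.order + g) := by
        have h2 := HahnSeries.coeff_single_mul_add (r := r) (x := b) (a := b.order + g)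
          (b := -b.order)
        have e : (b.order + g) + (-b.order) = g := by abel
        rwa [e] at h2
      rw [hy]
      simp [this, h, HahnSeries.coeff_one, hgpos.ne']
    refine ⟨⟨b.order + g, hbco, by simp [horder]⟩, ?_⟩
    simpa using hgpos.ne'
  -- support of powers in closure
  have hpow : ∀ n : ℕ, (y ^ n).support ⊆ (AddSubmonoid.closure S : Set G) := by
    intro n
    induction n with
    | zero =>
      intro g hg
      rw [pow_zero] at hg
      rw [HahnSeries.support_one, Set.mem_singleton_iff] at hg
      rw [hg]
      exact (AddSubmonoid.closure S).zero_mem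
    | succ n ih =>
      intro g hg
      rw [pow_succ] at hg
      obtain ⟨i, hi, j, hj, rfl⟩ := HahnSeries.support_mul_subset hg
      exact (AddSubmonoid.closure S).add_mem (ih hi) (AddSubmonoid.subset_closure (hysupp hj))
  -- express b⁻¹
  have h1 := HahnSeries.SummableFamily.one_sub_self_mul_hsum_powers hyo
  have h2 : (1 - y) = HahnSeries.single (-b.order) r * b := by rw [hy, sub_sub_cancel]
  rw [h2] at h1
  have hinv : b⁻¹ = HahnSeries.single (-b.order) r *
      (HahnSeries.SummableFamily.powers y).hsum := by
    refine inv_eq_of_mul_eq_one_right ?_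
    rw [← mul_assoc, mul_comm b, h1]
  rw [hinv]
  intro g hg
  obtain ⟨i, hi, j, hj, rfl⟩ := HahnSeries.support_mul_subset hg
  have hi' : i = -b.order := HahnSeries.eq_of_mem_support_single hi
  have hj' : j ∈ (AddSubmonoid.closure S : Set G) := by
    have := HahnSeries.SummableFamily.support_hsum_subset hj
    obtain ⟨_, ⟨n, rfl⟩, hn⟩ := this
    simp only [HahnSeries.SummableFamily.powers_toFun, hyo, ↓reduceIte] at hn
    exact hpow n hn
  exact ⟨j, hj', by rw [hi', horder]; abel⟩
end

section
/- Let a ∈ k((G)) with supp(a) ⊆ G^{>0}, and suppose there exists a totally ordered subfield Q ⊆ k such that a_g ∈ Q^{>0} for all g ∈ supp(a). Then supp((1−a)⁻¹) = ⨁_{n∈ℕ} supp(a), the set of all finite sums (including 0) of elements of supp(a). -/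
open scoped Pointwise

section Aux

variable {G : Type*} [AddCommGroup G] [LinearOrder G] [IsOrderedAddMonoid G]

/-- A Hahn series with support contained in the positive elements has positive `orderTop`. -/
lemma aux_orderTop_pos {R : Type*} [Zero R] (x : HahnSeries G R)
    (hpos : x.support ⊆ {g : G | 0 < g}) : 0 < x.orderTop := by
  by_cases hx : x = 0
  · simp [hx]
  · rw [HahnSeries.orderTop_of_ne_zero hx]
    exact_mod_cast hpos (x.isWF_support.min_mem (HahnSeries.support_nonempty_iff.2 hx))

variable {Q : Type*} [Field Q] [LinearOrder Q] [IsStrictOrderedRing Q]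

lemma aux_coeff_pow_nonneg {b : HahnSeries G Q} (hb : ∀ g, 0 ≤ b.coeff g) (n : ℕ) (g : G) :
    0 ≤ (b ^ n).coeff g := by
  induction n generalizing g with
  | zero =>
    by_cases h : g = 0 <;> simp [pow_zero, HahnSeries.coeff_one, h]
  | succ n ih =>
    rw [pow_succ, HahnSeries.coeff_mul]
    exact Finset.sum_nonneg fun ij _ => mul_nonneg (ih _) (hb _)

lemma aux_add_mem_mul_support {b c : HahnSeries G Q} (hb : ∀ g, 0 ≤ b.coeff g)
    (hc : ∀ g, 0 ≤ c.coeff g) {i j : G} (hi : i ∈ b.support) (hj : j ∈ c.support) :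
    i + j ∈ (b * c).support := by
  rw [HahnSeries.mem_support, HahnSeries.coeff_mul]
  refine ne_of_gt (Finset.sum_pos' (fun ij _ => mul_nonneg (hb _) (hc _)) ?_)
  refine ⟨(i, j), ?_, mul_pos ((hb i).lt_of_ne (Ne.symm hi)) ((hc j).lt_of_ne (Ne.symm hj))⟩
  rw [Finset.mem_addAntidiagonal]
  exact ⟨hi, hj, rfl⟩

lemma aux_iUnion_support_pow {b : HahnSeries G Q} (hb : ∀ g, 0 ≤ b.coeff g) :
    (⋃ n : ℕ, (b ^ n).support) = (AddSubmonoid.closure b.support : Set G) := by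
  apply Set.Subset.antisymm
  · refine Set.iUnion_subset fun n => ?_
    induction n with
    | zero =>
      intro g hg
      rw [pow_zero] at hg
      have : g = 0 := by
        by_contra hne
        exact hg (by simp [HahnSeries.coeff_one, hne])
      exact this ▸ (AddSubmonoid.closure b.support).zero_mem
    | succ n ih =>
      intro g hg
      rw [pow_succ] at hg
      obtain ⟨i, hi, j, hj, rfl⟩ := HahnSeries.support_mul_subset hg
      exact AddSubmonoid.add_mem _ (ih hi) (AddSubmonoid.subset_closure hj)
  · intro g hg
    induction hg using AddSubmonoid.closure_induction with
    | mem x hx =>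
      exact Set.mem_iUnion.2 ⟨1, by simpa [pow_one] using hx⟩
    | zero =>
      exact Set.mem_iUnion.2 ⟨0, by simp [pow_zero, HahnSeries.coeff_one]⟩
    | add x y _ _ hx hy =>
      obtain ⟨n, hn⟩ := Set.mem_iUnion.1 hx
      obtain ⟨m, hm⟩ := Set.mem_iUnion.1 hy
      refine Set.mem_iUnion.2 ⟨n + m, ?_⟩
      rw [pow_add]
      exact aux_add_mem_mul_support (aux_coeff_pow_nonneg hb n) (aux_coeff_pow_nonneg hb m) hn hm

end Aux

/-- Let `a ∈ k((G))` with `supp a ⊆ G^{>0}`, and suppose there is a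
totally ordered subfield `Q ⊆ k` (formalised as a linearly ordered field embedded in `k`
by a ring homomorphism) such that `a_g ∈ Q^{>0}` for all `g ∈ supp a`. Then
`supp ((1 − a)⁻¹) = ⨁_{n∈ℕ} supp a`, the set of all finite sums (including the empty
sum `0`) of elements of `supp a`, i.e. the additive submonoid generated by `supp a`. -/
theorem support_one_sub_inv
    {G : Type*} [AddCommGroup G] [LinearOrder G] [IsOrderedAddMonoid G] {k : Type*} [Field k]
    (a : HahnSeries G k) (hpos : a.support ⊆ {g : G | 0 < g})
    (h : ∃ (Q : Type) (_ : Field Q) (_ : LinearOrder Q) (_ : IsStrictOrderedRing Q) (f : Q →+* k),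
      ∀ g ∈ a.support, ∃ q : Q, 0 < q ∧ a.coeff g = f q) :
    ((1 - a)⁻¹).support = (AddSubmonoid.closure a.support : Set G) := by
  classical
  obtain ⟨Q, _, _, _, f, hf⟩ := h
  -- the series with coefficients in `Q`
  set bc : G → Q := fun g => if hg : a.coeff g ≠ 0 then (hf g hg).choose else 0 with hbc
  have hbsupp : Function.support bc ⊆ a.support := by
    intro g hg
    by_contra hga
    simp only [HahnSeries.mem_support, not_not] at hga
    apply hg
    simp [hbc, hga]
  set b : HahnSeries G Q := ⟨bc, a.isPWO_support.mono hbsupp⟩ with hbdef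
  have hcoeffb : ∀ g, b.coeff g = bc g := fun g => rfl
  have hbnn : ∀ g, 0 ≤ b.coeff g := by
    intro g
    simp only [hcoeffb, hbc]
    by_cases hg : a.coeff g ≠ 0
    · rw [dif_pos hg]
      exact ((hf g hg).choose_spec.1).le
    · rw [dif_neg hg]
  have hab : ∀ g, a.coeff g = f (b.coeff g) := by
    intro g
    simp only [hcoeffb, hbc]
    by_cases hg : a.coeff g ≠ 0
    · rw [dif_pos hg]
      exact (hf g hg).choose_spec.2
    · rw [dif_neg hg, map_zero]
      push_neg at hg
      exact hg
  have hsupp_eq : b.support = a.support := by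
    ext g
    simp only [HahnSeries.mem_support, hcoeffb, hbc]
    constructor
    · intro hg hga
      exact hg (dif_neg (not_not.2 hga))
    · intro hg
      rw [dif_pos hg]
      exact ne_of_gt (hf g hg).choose_spec.1
  have hfinj : Function.Injective f := f.injective
  have ha : 0 < a.orderTop := aux_orderTop_pos a hpos
  have hb : 0 < b.orderTop := aux_orderTop_pos b (hsupp_eq ▸ hpos)
  -- the inverse equals the sum of the powers of `a`
  have hinv : (1 - a)⁻¹ = (HahnSeries.SummableFamily.powers a).hsum :=
    (eq_inv_of_mul_eq_one_right
      (HahnSeries.SummableFamily.one_sub_self_mul_hsum_powers ha)).symm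
  -- powers of `a` are images of powers of `b`
  have hmapab : ∀ n : ℕ, ∀ g : G, (a ^ n).coeff g = f ((b ^ n).coeff g) := by
    intro n
    induction n with
    | zero =>
      intro g
      by_cases hg : g = 0 <;> simp [pow_zero, HahnSeries.coeff_one, hg]
    | succ n ih =>
      intro g
      rw [pow_succ, pow_succ]
      have h1 : (a ^ n * a) = ((b ^ n * b).map (f : Q →ₙ+* k) : HahnSeries G k) := by
        rw [HahnSeries.map_mul]
        congr 1
        · ext g'; rw [HahnSeries.map_coeff]; exact ih g'
        · ext g'; rw [HahnSeries.map_coeff]; exact hab g'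
      rw [h1, HahnSeries.map_coeff]
      rfl
  -- finiteness of co-supports for the powers of `b`
  have hfin : ∀ g : G, {n : ℕ | (b ^ n).coeff g ≠ 0}.Finite := by
    intro g
    have := (HahnSeries.SummableFamily.powers b).finite_co_support g
    simpa [hb, Function.HasFiniteSupport, Function.support] using this
  ext g
  rw [hinv, HahnSeries.mem_support, HahnSeries.SummableFamily.coeff_hsum]
  have hco : ∀ n : ℕ, ((HahnSeries.SummableFamily.powers a) n).coeff g = (a ^ n).coeff g := by
    intro n; rw [HahnSeries.SummableFamily.powers_of_orderTop_pos ha]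
  simp_rw [hco, hmapab]
  have hmapsum : (∑ᶠ n : ℕ, f ((b ^ n).coeff g)) = f (∑ᶠ n : ℕ, (b ^ n).coeff g) := by
    have := AddMonoidHom.map_finsum f.toAddMonoidHom (f := fun n : ℕ => (b ^ n).coeff g) (hfin g)
    simpa using this.symm
  rw [hmapsum, map_ne_zero_iff f hfinj]
  have key : (∑ᶠ n : ℕ, (b ^ n).coeff g) ≠ 0 ↔ ∃ n : ℕ, (b ^ n).coeff g ≠ 0 := by
    constructor
    · intro hne
      by_contra hall
      push_neg at hall
      exact hne (by simp [hall])
    · rintro ⟨n, hn⟩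
      have hpos' : 0 < ∑ᶠ m : ℕ, (b ^ m).coeff g := by
        rw [finsum_eq_sum _ (hfin g)]
        refine Finset.sum_pos' (fun m _ => aux_coeff_pow_nonneg hbnn m g) ⟨n, ?_, ?_⟩
        · exact (hfin g).mem_toFinset.2 hn
        · exact (aux_coeff_pow_nonneg hbnn n g).lt_of_ne (Ne.symm hn)
      exact hpos'.ne'
  rw [key]
  have hunion := aux_iUnion_support_pow hbnn
  rw [hsupp_eq] at hunion
  constructor
  · rintro ⟨n, hn⟩
    exact hunion ▸ Set.mem_iUnion.2 ⟨n, hn⟩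
  · intro hg
    obtain ⟨n, hn⟩ := Set.mem_iUnion.1 (hunion ▸ hg : g ∈ ⋃ n : ℕ, (b ^ n).support)
    exact ⟨n, hn⟩
end

section
/- In F₂((ℤ)) with a = t − t^p for a prime p, the support of (1−a)⁻¹ is a proper subset of ⨁_{n∈ℕ} supp(a) = ℕ; in particular, p ∉ supp((1−a)⁻¹). -/
/-!
The series `1 - a` is the image of the power series `1 - X + X ^ p`, so `(1 - a)⁻¹` is the image
of `v = (1 - X + X ^ p)⁻¹` and its support lies in `ℕ`. Comparing coefficients in
`(1 - X + X ^ p) * v = 1` gives `v (m + 1) = v m - v (m + 1 - p)` (the last term only for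
`m + 1 ≥ p`), so `v` is `1` in degrees below `p` and `v p = v (p - 1) - v 0 = 0`.
-/

namespace PowerSeries

variable {k : Type*} [Field k] {n : ℕ}

theorem coeff_succ_inv_one_sub_X_add_X_pow (hn : n ≠ 0) (m : ℕ) :
    coeff (m + 1) (1 - X + X ^ n : k⟦X⟧)⁻¹ =
      coeff m (1 - X + X ^ n : k⟦X⟧)⁻¹ -
        if n ≤ m + 1 then coeff (m + 1 - n) (1 - X + X ^ n : k⟦X⟧)⁻¹ else 0 := by
  have hu : constantCoeff (1 - X + X ^ n : k⟦X⟧) ≠ 0 := by simp [zero_pow hn]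
  have h := congrArg (coeff (m + 1)) (PowerSeries.mul_inv_cancel _ hu)
  rw [add_mul, sub_mul, one_mul, map_add, map_sub, coeff_succ_X_mul, coeff_X_pow_mul',
    coeff_one, if_neg m.succ_ne_zero] at h
  linear_combination h

theorem coeff_inv_one_sub_X_add_X_pow_of_lt (hn : n ≠ 0) {m : ℕ} (hm : m < n) :
    coeff m (1 - X + X ^ n : k⟦X⟧)⁻¹ = 1 := by
  induction m with
  | zero => simp [zero_pow hn]
  | succ m ih =>
    rw [coeff_succ_inv_one_sub_X_add_X_pow hn, if_neg (by omega), sub_zero, ih (by omega)]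

theorem coeff_inv_one_sub_X_add_X_pow_self (hn : n ≠ 0) :
    coeff n (1 - X + X ^ n : k⟦X⟧)⁻¹ = 0 := by
  obtain ⟨m, rfl⟩ := Nat.exists_eq_add_one_of_ne_zero hn
  rw [coeff_succ_inv_one_sub_X_add_X_pow hn, if_pos le_rfl, Nat.sub_self,
    coeff_inv_one_sub_X_add_X_pow_of_lt hn m.lt_succ_self,
    coeff_inv_one_sub_X_add_X_pow_of_lt hn (Nat.succ_pos m), sub_self]

end PowerSeries

namespace HahnSeries

variable {Γ R : Type*}

theorem support_single_sub_single [PartialOrder Γ] [Ring R] {a b : Γ} (hab : a ≠ b)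
    {r s : R} (hr : r ≠ 0) (hs : s ≠ 0) :
    (single a r - single b s).support = {a, b} := by
  ext g
  rcases eq_or_ne g a with rfl | hga
  · simp [hab, hr]
  · rcases eq_or_ne g b with rfl | hgb
    · simp [hga, hs]
    · simp [hga, hgb]

section OrderedRing

variable [CommRing Γ] [LinearOrder Γ] [IsStrictOrderedRing Γ]

theorem support_ofPowerSeries_subset [Semiring R] (x : PowerSeries R) :
    (ofPowerSeries Γ R x).support ⊆ Set.range ((↑) : ℕ → Γ) :=
  support_embDomain_subset.trans (Set.image_subset_range _ _)

theorem ofPowerSeries_inv [Field R] {x : PowerSeries R} (hx : PowerSeries.constantCoeff x ≠ 0) :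
    ofPowerSeries Γ R x⁻¹ = (ofPowerSeries Γ R x)⁻¹ :=
  (inv_eq_of_mul_eq_one_right <| by
    rw [← map_mul, PowerSeries.mul_inv_cancel x hx, map_one]).symm

end OrderedRing

end HahnSeries

theorem Int.addSubmonoidClosure_eq_nonneg {s : Set ℤ} (h1 : 1 ∈ s) (hs : ∀ n ∈ s, 0 ≤ n) :
    AddSubmonoid.closure s = AddSubmonoid.nonneg ℤ := by
  refine le_antisymm (AddSubmonoid.closure_le.2 hs) fun n (hn : 0 ≤ n) => ?_
  rw [← Int.toNat_of_nonneg hn, ← nsmul_one]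
  exact AddSubmonoid.nsmul_mem _ (AddSubmonoid.subset_closure h1) _

/-- In `𝔽_p((ℤ))` with `a = t − t^p` for a prime `p`, the support of
`(1 − a)⁻¹` is a proper subset of `⨁_{n∈ℕ} supp a`, which equals `ℕ` (the nonnegative
integers inside `ℤ`); in particular `p ∉ supp ((1 − a)⁻¹)`. -/
theorem support_geom_inv_proper (p : ℕ) [Fact p.Prime] :
    ∀ a : HahnSeries ℤ (ZMod p),
      a = HahnSeries.single (1 : ℤ) (1 : ZMod p) - HahnSeries.single (p : ℤ) (1 : ZMod p) →
      (AddSubmonoid.closure a.support : Set ℤ) = {n : ℤ | 0 ≤ n} ∧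
      ((1 - a)⁻¹).support ⊂ (AddSubmonoid.closure a.support : Set ℤ) ∧
      (p : ℤ) ∉ ((1 - a)⁻¹).support := by
  intro a ha
  have hp : p ≠ 0 := (Fact.out : p.Prime).ne_zero
  have h1p : (1 : ℤ) ≠ p := by exact_mod_cast (Fact.out : p.Prime).one_lt.ne
  have hclosure : (AddSubmonoid.closure a.support : Set ℤ) = {n : ℤ | 0 ≤ n} := by
    rw [ha, HahnSeries.support_single_sub_single h1p one_ne_zero one_ne_zero,
      Int.addSubmonoidClosure_eq_nonneg (by simp) (by rintro n (rfl | rfl) <;> positivity)]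
    rfl
  have hinv : (1 - a)⁻¹ =
      HahnSeries.ofPowerSeries ℤ (ZMod p) (1 - PowerSeries.X + PowerSeries.X ^ p)⁻¹ := by
    rw [HahnSeries.ofPowerSeries_inv (by simp [zero_pow hp]), ha]
    simp [sub_add]
  have hp_notMem : (p : ℤ) ∉ ((1 - a)⁻¹).support := by
    rw [hinv, HahnSeries.mem_support, not_not, HahnSeries.ofPowerSeries_apply_coeff,
      PowerSeries.coeff_inv_one_sub_X_add_X_pow_self hp]
  have hsupport : ((1 - a)⁻¹).support ⊆ {n : ℤ | 0 ≤ n} := by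
    rw [hinv]
    refine (HahnSeries.support_ofPowerSeries_subset _).trans ?_
    rintro _ ⟨m, rfl⟩
    exact Int.natCast_nonneg m
  rw [hclosure, Set.ssubset_iff_of_subset hsupport]
  exact ⟨rfl, ⟨p, Int.natCast_nonneg p, hp_notMem⟩, hp_notMem⟩
end

section
/- If F is a Rayner field family (i.e. F satisfies (S2), (S3), (S5), (A1), (A3), (A4)), then F also satisfies (S1) all singletons are in F and (A2) closure under sumsets; consequently, every Rayner field k((F)) is a Hahn field in k((G)). -/
open scoped Pointwise

open HahnSeries in
private lemma pow_support_subset_closure {G : Type*} [AddCommGroup G] [LinearOrder G] [IsOrderedAddMonoid G]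
    {k : Type*} [Field k] (w : HahnSeries G k) (n : ℕ) :
    (w ^ n).support ⊆ (AddSubmonoid.closure w.support : Set G) := by
  induction n with
  | zero =>
    rw [pow_zero, ← single_zero_one]
    refine (support_single_subset).trans ?_
    intro g hg
    rw [Set.mem_singleton_iff] at hg
    subst hg
    exact AddSubmonoid.zero_mem _
  | succ n ih =>
    rw [pow_succ]
    refine support_mul_subset.trans ?_
    rintro g ⟨i, hi, j, hj, rfl⟩
    exact AddSubmonoid.add_mem _ (ih hi) (AddSubmonoid.subset_closure hj)

open HahnSeries in
private lemma support_sub_subset {G : Type*} [AddCommGroup G] [LinearOrder G] [IsOrderedAddMonoid G]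
    {k : Type*} [Field k] (a b : HahnSeries G k) :
    (a - b).support ⊆ a.support ∪ b.support := by
  rw [sub_eq_add_neg]
  refine (support_add_subset _ _).trans ?_
  rw [support_neg]

/-- If `F` is a Rayner field family, i.e. it satisfies (S2) closure under
subsets, (S3) closure under finite unions, (S5) nonemptiness, (A1) the union of its members
generates `G`, (A3) closure under translations and (A4) closure under finite-sum closures
of members contained in `G^{≥0}`, then `F` also satisfies (S1) all singletons are in `F`
and (A2) closure under sumsets; consequently, the Rayner field `k((F))` is a Hahn field in
`k((G))`, i.e. a subfield containing all monomials `α t^g`. -/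
theorem rayner_is_hahnField
    {G : Type*} [AddCommGroup G] [LinearOrder G] [IsOrderedAddMonoid G] {k : Type*} [Field k]
    (F : Set (Set G)) (hWF : ∀ A ∈ F, A.IsWF)
    (hS2 : ∀ A ∈ F, ∀ B ⊆ A, B ∈ F)
    (hS3 : ∀ A ∈ F, ∀ B ∈ F, A ∪ B ∈ F)
    (hS5 : F.Nonempty)
    (hA1 : AddSubgroup.closure (⋃ A ∈ F, A) = ⊤)
    (hA3 : ∀ A ∈ F, ∀ g : G, (fun x => x + g) '' A ∈ F)
    (hA4 : ∀ A ∈ F, A ⊆ {g : G | 0 ≤ g} → (AddSubmonoid.closure A : Set G) ∈ F) :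
    (∀ g : G, ({g} : Set G) ∈ F) ∧
    (∀ A ∈ F, ∀ B ∈ F, A + B ∈ F) ∧
    (∃ K : Subfield (HahnSeries G k),
      (K : Set (HahnSeries G k)) = {a : HahnSeries G k | a.support ∈ F} ∧
      ∀ (α : k) (g : G), HahnSeries.single g α ∈ K) := by
  classical
  obtain ⟨A₀, hA₀⟩ := hS5
  have hempty : (∅ : Set G) ∈ F := hS2 A₀ hA₀ ∅ (Set.empty_subset _)
  have hzero : ({0} : Set G) ∈ F := by
    have h := hA4 ∅ hempty (Set.empty_subset _)
    rwa [AddSubmonoid.closure_empty, AddSubmonoid.coe_bot] at h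
  -- (S1)
  have hS1 : ∀ g : G, ({g} : Set G) ∈ F := by
    intro g
    have h := hA3 _ hzero g
    rwa [Set.image_singleton, zero_add] at h
  -- (A2)
  have hA2 : ∀ A ∈ F, ∀ B ∈ F, A + B ∈ F := by
    intro A hA B hB
    rcases Set.eq_empty_or_nonempty A with rfl | hAne
    · rw [Set.empty_add]; exact hempty
    rcases Set.eq_empty_or_nonempty B with rfl | hBne
    · rw [Set.add_empty]; exact hempty
    set a0 := (hWF A hA).min hAne with ha0
    set b0 := (hWF B hB).min hBne with hb0
    set A' := (fun x => x + (-a0)) '' A with hA'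
    set B' := (fun x => x + (-b0)) '' B with hB'
    have hA'F : A' ∈ F := hA3 A hA _
    have hB'F : B' ∈ F := hA3 B hB _
    have hU : A' ∪ B' ∈ F := hS3 _ hA'F _ hB'F
    have hUpos : A' ∪ B' ⊆ {g : G | 0 ≤ g} := by
      rintro g (⟨x, hx, rfl⟩ | ⟨x, hx, rfl⟩)
      · simpa using (hWF A hA).min_le hAne hx
      · simpa using (hWF B hB).min_le hBne hx
    have hC : (AddSubmonoid.closure (A' ∪ B') : Set G) ∈ F := hA4 _ hU hUpos
    have hT : (fun x => x + (a0 + b0)) '' (AddSubmonoid.closure (A' ∪ B') : Set G) ∈ F :=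
      hA3 _ hC _
    refine hS2 _ hT _ ?_
    rintro g ⟨x, hx, y, hy, rfl⟩
    refine ⟨(x + (-a0)) + (y + (-b0)), ?_, by abel⟩
    exact AddSubmonoid.add_mem _
      (AddSubmonoid.subset_closure (Or.inl ⟨x, hx, rfl⟩))
      (AddSubmonoid.subset_closure (Or.inr ⟨y, hy, rfl⟩))
  refine ⟨hS1, hA2, ?_⟩
  -- the subfield
  have hinv : ∀ x : HahnSeries G k, x.support ∈ F → x⁻¹.support ∈ F := by
    intro x hx
    by_cases x0 : x = 0
    · subst x0; simpa using hempty
    have hlc : (x.leadingCoeff)⁻¹ * x.leadingCoeff = 1 :=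
      inv_mul_cancel₀ (HahnSeries.leadingCoeff_ne_zero.mpr x0)
    have hy := HahnSeries.unit_aux x hlc _ (neg_add_cancel _)
    set y := 1 - HahnSeries.single (-x.order) (x.leadingCoeff)⁻¹ * x with hydef
    set z := HahnSeries.single (-x.order) (x.leadingCoeff)⁻¹ *
      (HahnSeries.SummableFamily.powers y).hsum with hzdef
    have hxz : x * z = 1 := by
      have h := HahnSeries.SummableFamily.one_sub_self_mul_hsum_powers hy
      have h1y : 1 - y = HahnSeries.single (-x.order) (x.leadingCoeff)⁻¹ * x := by
        rw [hydef]; ring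
      rw [h1y] at h
      rw [hzdef, ← mul_assoc, mul_comm x, h]
    have hzinv : x⁻¹ = z := inv_eq_of_mul_eq_one_right hxz
    -- translated support of x
    set S := (fun g => g + (-x.order)) '' x.support with hSdef
    have hSF : S ∈ F := hA3 _ hx _
    have hUF : ({0} : Set G) ∪ S ∈ F := hS3 _ hzero _ hSF
    have hUpos : ({0} : Set G) ∪ S ⊆ {g : G | 0 ≤ g} := by
      rintro g (hg | ⟨a, ha, rfl⟩)
      · simp_all
      · simpa using HahnSeries.order_le_of_coeff_ne_zero ha
    have hCF : (AddSubmonoid.closure (({0} : Set G) ∪ S) : Set G) ∈ F := hA4 _ hUF hUpos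
    have hysub : y.support ⊆ (AddSubmonoid.closure (({0} : Set G) ∪ S) : Set G) := by
      refine (support_sub_subset _ _).trans ?_
      rintro g (hg | hg)
      · rw [← HahnSeries.single_zero_one] at hg
        have := HahnSeries.support_single_subset hg
        rw [Set.mem_singleton_iff] at this
        subst this
        exact AddSubmonoid.zero_mem _
      · obtain ⟨i, hi, j, hj, rfl⟩ := HahnSeries.support_mul_subset hg
        have hi' := HahnSeries.support_single_subset hi
        rw [Set.mem_singleton_iff] at hi'
        subst hi'
        refine AddSubmonoid.subset_closure (Or.inr ⟨j, hj, by abel⟩)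
    have hhsum : (HahnSeries.SummableFamily.powers y).hsum.support ⊆
        (AddSubmonoid.closure (({0} : Set G) ∪ S) : Set G) := by
      refine HahnSeries.SummableFamily.support_hsum_subset.trans ?_
      intro g hg
      obtain ⟨n, hn⟩ := Set.mem_iUnion.mp hg
      rw [HahnSeries.SummableFamily.powers_of_orderTop_pos hy] at hn
      exact (AddSubmonoid.closure_le.mpr hysub) (pow_support_subset_closure y n hn)
    have hTF : (fun g => g + (-x.order)) ''
        (AddSubmonoid.closure (({0} : Set G) ∪ S) : Set G) ∈ F := hA3 _ hCF _
    refine hS2 _ hTF _ ?_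
    rw [hzinv]
    intro g hg
    obtain ⟨i, hi, j, hj, rfl⟩ := HahnSeries.support_mul_subset hg
    have hi' := HahnSeries.support_single_subset hi
    rw [Set.mem_singleton_iff] at hi'
    subst hi'
    exact ⟨j, hhsum hj, by abel⟩
  refine ⟨{ carrier := {a : HahnSeries G k | a.support ∈ F}
            mul_mem' := ?_
            one_mem' := ?_
            add_mem' := ?_
            zero_mem' := ?_
            neg_mem' := ?_
            inv_mem' := fun x hx => hinv x hx }, rfl, ?_⟩
  · intro a b ha hb
    refine hS2 _ (hA2 _ ha _ hb) _ HahnSeries.support_mul_subset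
  · refine hS2 _ hzero _ ?_
    rw [← HahnSeries.single_zero_one]
    exact HahnSeries.support_single_subset
  · intro a b ha hb
    exact hS2 _ (hS3 _ ha _ hb) _ (HahnSeries.support_add_subset _ _)
  · simpa using hempty
  · intro a ha
    show (-a).support ∈ F
    rw [HahnSeries.support_neg]
    exact ha
  · intro α g
    exact hS2 _ (hS1 g) _ HahnSeries.support_single_subset
end

section
/- Suppose char(k) = 0. Then the k-hull k((F)) is a Rayner field (i.e. F satisfies (S2), (S3), (S5), (A1), (A3), (A4)) if and only if k((F)) is a Hahn field in k((G)). -/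
/-!
If `F` satisfies the axioms, `{a | a.support ∈ F}` is closed under the field operations:
`supp (a * b) ⊆ supp a + supp b` lies in a translate of the additive monoid generated by
nonnegative translates of `supp a ∪ supp b`, and, writing `o` and `c` for the order and leading
coefficient of `a`, `a⁻¹ = c⁻¹ t^(-o) ∑ wⁿ` with `w = 1 - c⁻¹ t^(-o) a`, whose support lies in
`supp a - o ⊆ G^{≥0}`.

Conversely, test the hull on Hahn series with natural-number coefficients: in characteristic
zero their sums and products have no cancellation, so `𝟙_A + 𝟙_B` has support `A ∪ B`, and
`(1 - 𝟙_{A \ {0}})⁻¹ = ∑ 𝟙_{A \ {0}}ⁿ` has support exactly the additive monoid generated by `A`.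
-/

open scoped Pointwise

namespace HahnSeries

section PartialOrder

variable {Γ R : Type*} [PartialOrder Γ]

noncomputable def ofSet [Zero R] [One R] (A : Set Γ) (hA : A.IsPWO) : R⟦Γ⟧ where
  coeff := A.indicator 1
  isPWO_support' := hA.mono Set.support_indicator_subset

theorem support_ofSet [Zero R] [One R] [NeZero (1 : R)] (A : Set Γ) (hA : A.IsPWO) :
    (ofSet A hA : R⟦Γ⟧).support = A := by
  simp [support, ofSet, Set.support_indicator]

theorem support_add_eq_union [AddCommMonoid R] [PartialOrder R]
    [CanonicallyOrderedAdd R] (x y : R⟦Γ⟧) : (x + y).support = x.support ∪ y.support := by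
  ext g
  simp only [mem_support, coeff_add, ne_eq, add_eq_zero, not_and_or, Set.mem_union]

end PartialOrder

section OrderedCancelAddMonoid

variable {Γ R : Type*} [AddCommMonoid Γ] [PartialOrder Γ] [IsOrderedCancelAddMonoid Γ]

def mapRingHom {S : Type*} [Semiring R] [Semiring S] (f : R →+* S) : R⟦Γ⟧ →+* S⟦Γ⟧ where
  toFun x := x.map f
  map_zero' := HahnSeries.map_zero (f : ZeroHom R S)
  map_one' := HahnSeries.map_one f.toMonoidWithZeroHom
  map_add' _ _ := HahnSeries.map_add (f : R →+ S)
  map_mul' _ _ := HahnSeries.map_mul (f : R →ₙ+* S)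

@[simp]
theorem coeff_mapRingHom {S : Type*} [Semiring R] [Semiring S] (f : R →+* S) (x : R⟦Γ⟧) (g : Γ) :
    (mapRingHom f x).coeff g = f (x.coeff g) :=
  rfl

theorem support_mapRingHom_natCast [Semiring R] [CharZero R] (x : ℕ⟦Γ⟧) :
    (mapRingHom (Nat.castRingHom R) x).support = x.support := by
  ext g
  simp [mem_support]

theorem support_single_mul_subset [Semiring R] (a : Γ) (r : R) (x : R⟦Γ⟧) :
    (single a r * x).support ⊆ (· + a) '' x.support := by
  intro g hg
  obtain ⟨b, hb, c, hc, rfl⟩ := support_mul_subset hg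
  rw [eq_of_mem_support_single hb]
  exact ⟨c, hc, add_comm c a⟩

theorem support_single_one_mul [Semiring R] (a : Γ) (x : R⟦Γ⟧) :
    (single a (1 : R) * x).support = (· + a) '' x.support := by
  refine (support_single_mul_subset a 1 x).antisymm ?_
  rintro _ ⟨b, hb, rfl⟩
  rwa [mem_support, coeff_single_mul_add, one_mul]

section CanonicallyOrdered

variable [Semiring R] [PartialOrder R] [CanonicallyOrderedAdd R]

theorem add_subset_support_mul [NoZeroDivisors R] (x y : R⟦Γ⟧) :
    x.support + y.support ⊆ (x * y).support := by
  rintro _ ⟨a, ha, b, hb, rfl⟩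
  rw [mem_support, coeff_mul, Ne, Finset.sum_eq_zero_iff]
  exact fun h => mul_ne_zero ha hb (h (a, b) (Finset.mem_antidiagonal.2 ⟨ha, hb, rfl⟩))

theorem closure_support_subset_iUnion_support_pow [NoZeroDivisors R] [Nontrivial R] (x : R⟦Γ⟧) :
    (AddSubmonoid.closure x.support : Set Γ) ⊆ ⋃ n, (x ^ n).support := by
  intro g hg
  induction hg using AddSubmonoid.closure_induction with
  | mem g hg => exact Set.mem_iUnion.2 ⟨1, by rwa [pow_one]⟩
  | zero => exact Set.mem_iUnion.2 ⟨0, by simp [pow_zero, support_one]⟩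
  | add a b _ _ ha hb =>
    obtain ⟨m, hm⟩ := Set.mem_iUnion.1 ha
    obtain ⟨n, hn⟩ := Set.mem_iUnion.1 hb
    refine Set.mem_iUnion.2 ⟨m + n, ?_⟩
    rw [_root_.pow_add]
    exact add_subset_support_mul _ _ ⟨a, hm, b, hn, rfl⟩

theorem iUnion_support_pow [NoZeroDivisors R] [Nontrivial R] (x : R⟦Γ⟧) :
    ⋃ n, (x ^ n).support = AddSubmonoid.closure x.support :=
  (Set.iUnion_subset (SummableFamily.support_pow_subset_closure x)).antisymm
    (closure_support_subset_iUnion_support_pow x)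

end CanonicallyOrdered

end OrderedCancelAddMonoid

theorem zero_lt_orderTop_of_forall_mem_support {Γ R : Type*} [Zero Γ] [LinearOrder Γ] [Zero R]
    {x : R⟦Γ⟧} (hx : ∀ g ∈ x.support, 0 < g) : 0 < x.orderTop := by
  obtain rfl | h := eq_or_ne x 0
  · simp
  · rw [orderTop_of_ne_zero h]
    exact WithTop.coe_lt_coe.2 (hx _ (x.isWF_support.min_mem _))

section LinearOrder

variable {Γ R : Type*} [AddCommMonoid Γ] [LinearOrder Γ] [IsOrderedCancelAddMonoid Γ]

theorem support_hsum_powers_subset [CommRing R] (x : R⟦Γ⟧) :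
    (SummableFamily.powers x).hsum.support ⊆ AddSubmonoid.closure x.support := by
  refine SummableFamily.support_hsum_subset.trans (Set.iUnion_subset fun n => ?_)
  rw [SummableFamily.powers_toFun]
  refine (SummableFamily.support_pow_subset_closure _ n).trans
    (SetLike.coe_subset_coe.2 (AddSubmonoid.closure_mono ?_))
  split_ifs
  · rfl
  · simp

theorem support_hsum_powers_mapRingHom_natCast [CommRing R] [CharZero R] (y : ℕ⟦Γ⟧)
    (hy : ∀ g ∈ y.support, 0 < g) :
    (SummableFamily.powers (mapRingHom (Nat.castRingHom R) y)).hsum.support =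
      AddSubmonoid.closure y.support := by
  set x := mapRingHom (Nat.castRingHom R) y
  have hx : 0 < x.orderTop :=
    zero_lt_orderTop_of_forall_mem_support (by rwa [support_mapRingHom_natCast])
  rw [← iUnion_support_pow]
  ext g
  have hcoeff (n : ℕ) : ((SummableFamily.powers x) n).coeff g = ((y ^ n).coeff g : R) := by
    rw [SummableFamily.powers_of_orderTop_pos hx, ← map_pow]
    rfl
  have hfin : (Function.support fun n => (y ^ n).coeff g).Finite :=
    ((SummableFamily.powers x).finite_co_support g).subset fun n hn => by
      rw [Function.mem_support, hcoeff]
      exact_mod_cast hn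
  have hcast : ∑ᶠ n, ((y ^ n).coeff g : R) = ((∑ᶠ n, (y ^ n).coeff g : ℕ) : R) :=
    ((Nat.castAddMonoidHom R).map_finsum hfin).symm
  simp only [mem_support, SummableFamily.coeff_hsum, finsum_congr hcoeff, hcast, Nat.cast_ne_zero,
    Set.mem_iUnion]
  constructor
  · intro h
    by_contra! hzero
    exact h (finsum_eq_zero_of_forall_eq_zero hzero)
  · rintro ⟨n, hn⟩
    exact (finsum_pos (fun _ => Nat.zero_le _) ⟨n, Nat.pos_of_ne_zero hn⟩ hfin).ne'

end LinearOrder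

theorem support_inv_subset_s18 {Γ R : Type*} [AddCommGroup Γ] [LinearOrder Γ] [IsOrderedAddMonoid Γ]
    [Field R] (x : R⟦Γ⟧) :
    x⁻¹.support ⊆
      (· + -x.order) '' AddSubmonoid.closure ((· + -x.order) '' x.support) := by
  have hw : (1 - single (-x.order) x.leadingCoeff⁻¹ * x).support ⊆
      insert 0 ((· + -x.order) '' x.support) :=
    (support_sub_subset _ _).trans
      (Set.union_subset_union support_one.subset (support_single_mul_subset _ _ _))
  rw [inv_def, ← AddSubmonoid.closure_insert_zero]
  exact (support_single_mul_subset _ _ _).trans (Set.image_mono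
    ((support_hsum_powers_subset _).trans (AddSubmonoid.closure_mono hw)))

end HahnSeries

theorem image_add_neg_subset_nonneg {G : Type*} [AddGroup G] [LinearOrder G] [AddRightMono G]
    {A : Set G} {m : G} (hm : ∀ a ∈ A, m ≤ a) : (· + -m) '' A ⊆ {g | 0 ≤ g} := by
  rintro _ ⟨a, ha, rfl⟩
  simpa [← sub_eq_add_neg] using hm a ha

section

variable {G : Type*} [AddCommGroup G] [LinearOrder G]

structure IsRaynerFamily (F : Set (Set G)) : Prop where
  subset_mem : ∀ A ∈ F, ∀ B ⊆ A, B ∈ F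
  union_mem : ∀ A ∈ F, ∀ B ∈ F, A ∪ B ∈ F
  nonempty : F.Nonempty
  closure_iUnion_eq_top : AddSubgroup.closure (⋃ A ∈ F, A) = ⊤
  image_add_mem : ∀ A ∈ F, ∀ g : G, (fun x => x + g) '' A ∈ F
  closure_mem : ∀ A ∈ F, A ⊆ {g : G | 0 ≤ g} → (AddSubmonoid.closure A : Set G) ∈ F

theorem isRaynerFamily_iff {F : Set (Set G)} :
    IsRaynerFamily F ↔
      (∀ A ∈ F, ∀ B ⊆ A, B ∈ F) ∧
      (∀ A ∈ F, ∀ B ∈ F, A ∪ B ∈ F) ∧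
      F.Nonempty ∧
      AddSubgroup.closure (⋃ A ∈ F, A) = ⊤ ∧
      (∀ A ∈ F, ∀ g : G, (fun x => x + g) '' A ∈ F) ∧
      (∀ A ∈ F, A ⊆ {g : G | 0 ≤ g} → (AddSubmonoid.closure A : Set G) ∈ F) :=
  ⟨fun ⟨h₁, h₂, h₃, h₄, h₅, h₆⟩ => ⟨h₁, h₂, h₃, h₄, h₅, h₆⟩,
    fun ⟨h₁, h₂, h₃, h₄, h₅, h₆⟩ => ⟨h₁, h₂, h₃, h₄, h₅, h₆⟩⟩

namespace IsRaynerFamily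

variable {F : Set (Set G)}

theorem empty_mem (hF : IsRaynerFamily F) : ∅ ∈ F :=
  let ⟨A, hA⟩ := hF.nonempty
  hF.subset_mem A hA ∅ (Set.empty_subset A)

theorem zero_mem (hF : IsRaynerFamily F) : {0} ∈ F := by
  simpa using hF.closure_mem ∅ hF.empty_mem (Set.empty_subset _)

theorem singleton_mem (hF : IsRaynerFamily F) (g : G) : {g} ∈ F := by
  simpa using hF.image_add_mem _ hF.zero_mem g

variable [IsOrderedAddMonoid G]

theorem image_add_closure_mem (hF : IsRaynerFamily F) {A : Set G} (hA : A ∈ F) {m : G}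
    (hm : ∀ a ∈ A, m ≤ a) (g : G) :
    (· + g) '' (AddSubmonoid.closure ((· + -m) '' A) : Set G) ∈ F :=
  hF.image_add_mem _ (hF.closure_mem _ (hF.image_add_mem A hA (-m))
    (image_add_neg_subset_nonneg hm)) g

variable {k : Type*} [Field k]

theorem support_mul_mem (hF : IsRaynerFamily F) {a b : HahnSeries G k} (ha : a.support ∈ F)
    (hb : b.support ∈ F) : (a * b).support ∈ F := by
  set m := a.order ⊓ b.order
  have hm : ∀ g ∈ a.support ∪ b.support, m ≤ g := by
    rintro g (hg | hg)
    · exact inf_le_left.trans (HahnSeries.order_le_of_coeff_ne_zero hg)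
    · exact inf_le_right.trans (HahnSeries.order_le_of_coeff_ne_zero hg)
  refine hF.subset_mem _ (hF.image_add_closure_mem (hF.union_mem _ ha _ hb) hm (m + m)) _
    (HahnSeries.support_mul_subset.trans ?_)
  rintro _ ⟨x, hx, y, hy, rfl⟩
  exact ⟨(x + -m) + (y + -m),
    add_mem (AddSubmonoid.subset_closure ⟨x, Or.inl hx, rfl⟩)
      (AddSubmonoid.subset_closure ⟨y, Or.inr hy, rfl⟩), by dsimp only; abel⟩

theorem support_inv_mem (hF : IsRaynerFamily F) {a : HahnSeries G k} (ha : a.support ∈ F) :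
    a⁻¹.support ∈ F :=
  hF.subset_mem _ (hF.image_add_closure_mem ha
    (fun _ hg => HahnSeries.order_le_of_coeff_ne_zero hg) _) _ (HahnSeries.support_inv_subset_s18 a)

def subfield (hF : IsRaynerFamily F) : Subfield (HahnSeries G k) where
  carrier := {a | a.support ∈ F}
  zero_mem' := by simpa using hF.empty_mem
  one_mem' := by simpa [HahnSeries.support_one] using hF.zero_mem
  add_mem' {a b} ha hb :=
    hF.subset_mem _ (hF.union_mem _ ha _ hb) _ (HahnSeries.support_add_subset a b)
  neg_mem' {a} ha := by simpa [HahnSeries.support_neg] using ha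
  mul_mem' := hF.support_mul_mem
  inv_mem' _ := hF.support_inv_mem

theorem single_mem_subfield (hF : IsRaynerFamily F) (α : k) (g : G) :
    HahnSeries.single g α ∈ hF.subfield :=
  hF.subset_mem _ (hF.singleton_mem g) _ HahnSeries.support_single_subset

end IsRaynerFamily

variable [IsOrderedAddMonoid G] {k : Type*} [Field k]

def IsHahnHull (K : Subfield (HahnSeries G k)) (F : Set (Set G)) : Prop :=
  ∀ a, a ∈ K ↔ a.support ∈ F

namespace IsHahnHull

open HahnSeries

variable {K : Subfield (HahnSeries G k)} {F : Set (Set G)}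

theorem mem_iff (hK : IsHahnHull K F) {a : HahnSeries G k} : a ∈ K ↔ a.support ∈ F :=
  hK a

variable [CharZero k]

theorem natCast_mem_iff (hK : IsHahnHull K F) (y : HahnSeries G ℕ) :
    mapRingHom (Nat.castRingHom k) y ∈ K ↔ y.support ∈ F := by
  rw [hK.mem_iff, support_mapRingHom_natCast]

theorem natCast_ofSet_mem (hK : IsHahnHull K F) {A : Set G} (hA : A ∈ F) (hA' : A.IsPWO) :
    mapRingHom (Nat.castRingHom k) (ofSet A hA') ∈ K := by
  rwa [hK.natCast_mem_iff, support_ofSet]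

theorem union_mem (hK : IsHahnHull K F) (hWF : ∀ A ∈ F, A.IsWF) {A B : Set G} (hA : A ∈ F)
    (hB : B ∈ F) : A ∪ B ∈ F := by
  have := add_mem (hK.natCast_ofSet_mem hA (hWF A hA).isPWO)
    (hK.natCast_ofSet_mem hB (hWF B hB).isPWO)
  rwa [← map_add, hK.natCast_mem_iff, support_add_eq_union, support_ofSet, support_ofSet] at this

theorem subset_mem (hK : IsHahnHull K F) (hWF : ∀ A ∈ F, A.IsWF) {A B : Set G} (hA : A ∈ F)
    (hBA : B ⊆ A) : B ∈ F := by
  set u : HahnSeries G ℕ := ofSet A (hWF A hA).isPWO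
  set v : HahnSeries G ℕ := ofSet B ((hWF A hA).isPWO.mono hBA)
  have huv : mapRingHom (Nat.castRingHom k) (u + v) ∈ K := by
    rwa [hK.natCast_mem_iff, support_add_eq_union, support_ofSet, support_ofSet,
      Set.union_eq_self_of_subset_right hBA]
  have := sub_mem huv (hK.natCast_ofSet_mem hA (hWF A hA).isPWO)
  rwa [map_add, add_sub_cancel_left, hK.natCast_mem_iff, support_ofSet] at this

theorem singleton_mem (hK : IsHahnHull K F) (hsingle : ∀ (α : k) (g : G), single g α ∈ K)
    (g : G) : {g} ∈ F := by
  simpa [support_single_of_ne one_ne_zero] using hK.mem_iff.1 (hsingle 1 g)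

theorem image_add_mem (hK : IsHahnHull K F) (hWF : ∀ A ∈ F, A.IsWF)
    (hsingle : ∀ (α : k) (g : G), single g α ∈ K) {A : Set G} (hA : A ∈ F) (g : G) :
    (fun x => x + g) '' A ∈ F := by
  have := mul_mem (hsingle 1 g) (hK.natCast_ofSet_mem hA (hWF A hA).isPWO)
  rwa [hK.mem_iff, support_single_one_mul, support_mapRingHom_natCast, support_ofSet] at this

theorem closure_mem (hK : IsHahnHull K F) (hWF : ∀ A ∈ F, A.IsWF) {A : Set G} (hA : A ∈ F)
    (hpos : A ⊆ {g | 0 ≤ g}) : (AddSubmonoid.closure A : Set G) ∈ F := by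
  set y : HahnSeries G ℕ := ofSet (A \ {0}) ((hWF A hA).isPWO.mono Set.sdiff_subset)
  have hy : y.support = A \ {0} := support_ofSet _ _
  have hy_pos : ∀ g ∈ y.support, 0 < g := by
    rw [hy]
    exact fun g hg => (hpos hg.1).lt_of_ne (Ne.symm hg.2)
  set x := mapRingHom (Nat.castRingHom k) y
  have hx : 0 < x.orderTop :=
    zero_lt_orderTop_of_forall_mem_support (by rwa [support_mapRingHom_natCast])
  have hxK : x ∈ K := (hK.natCast_mem_iff y).2 (hy ▸ hK.subset_mem hWF hA Set.sdiff_subset)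
  have hinv := inv_mem (sub_mem (one_mem K) hxK)
  rwa [inv_eq_of_mul_eq_one_right (SummableFamily.one_sub_self_mul_hsum_powers hx), hK.mem_iff,
    support_hsum_powers_mapRingHom_natCast y hy_pos, hy, ← AddSubmonoid.closure_insert_zero,
    Set.insert_sdiff_singleton, AddSubmonoid.closure_insert_zero] at hinv

theorem isRaynerFamily (hK : IsHahnHull K F) (hWF : ∀ A ∈ F, A.IsWF)
    (hsingle : ∀ (α : k) (g : G), single g α ∈ K) : IsRaynerFamily F where
  subset_mem _ hA _ hBA := hK.subset_mem hWF hA hBA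
  union_mem _ hA _ hB := hK.union_mem hWF hA hB
  nonempty := ⟨{0}, hK.singleton_mem hsingle 0⟩
  closure_iUnion_eq_top := eq_top_iff.2 fun g _ =>
    AddSubgroup.subset_closure (Set.mem_biUnion (hK.singleton_mem hsingle g) rfl)
  image_add_mem _ hA g := hK.image_add_mem hWF hsingle hA g
  closure_mem _ hA hpos := hK.closure_mem hWF hA hpos

end IsHahnHull

end

/-- Suppose `char k = 0`. Then the `k`-hull `k((F))` is a Rayner field
(i.e. `F` satisfies (S2) subset closure, (S3) union closure, (S5) nonemptiness, (A1) the
members of `F` generate `G`, (A3) translation closure and (A4) finite-sum closure for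
members contained in `G^{≥0}`) if and only if `k((F))` is a Hahn field in `k((G))`, i.e.
a subfield containing all monomials `α t^g`. -/
theorem rayner_iff_hahnField_charZero
    {G : Type*} [AddCommGroup G] [LinearOrder G] [IsOrderedAddMonoid G] {k : Type*} [Field k] [CharZero k]
    (F : Set (Set G)) (hWF : ∀ A ∈ F, A.IsWF) :
    ((∀ A ∈ F, ∀ B ⊆ A, B ∈ F) ∧
     (∀ A ∈ F, ∀ B ∈ F, A ∪ B ∈ F) ∧
     F.Nonempty ∧
     AddSubgroup.closure (⋃ A ∈ F, A) = ⊤ ∧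
     (∀ A ∈ F, ∀ g : G, (fun x => x + g) '' A ∈ F) ∧
     (∀ A ∈ F, A ⊆ {g : G | 0 ≤ g} → (AddSubmonoid.closure A : Set G) ∈ F)) ↔
    (∃ K : Subfield (HahnSeries G k),
      (K : Set (HahnSeries G k)) = {a : HahnSeries G k | a.support ∈ F} ∧
      ∀ (α : k) (g : G), HahnSeries.single g α ∈ K) := by
  rw [← isRaynerFamily_iff]
  refine ⟨fun hF => ⟨hF.subfield, rfl, hF.single_mem_subfield⟩, ?_⟩
  rintro ⟨K, hK, hsingle⟩
  exact IsHahnHull.isRaynerFamily (fun a => Set.ext_iff.1 hK a) hWF hsingle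
end

section
/- Let G be a countable nontrivial ordered abelian group and K = F₂(t^g : g ∈ G) the subfield of F₂((G)) generated by all monomials. Then K is a Hahn field in F₂((G)) but the family F = { supp(a) : a ∈ K } does not satisfy (S2) closure under subsets; hence K is a Hahn field that is not a Rayner field. -/
/-!
For `g > 0` the geometric series `(1 - t^g)⁻¹ = ∑ₙ t^(n • g)` lies in `K` and has infinite
support; it is the image of `1 / (1 - X)` under the substitution `X ↦ t^g`. If supports of
elements of `K` were closed under subsets, each of the uncountably many subsets of this support
would be the support of some element of `K`, but `K` is countable, being generated by the
countably many monomials.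
-/

open HahnSeries Cardinal

theorem Set.Infinite.not_countable_powerset {α : Type*} {s : Set α} (hs : s.Infinite) :
    ¬ (𝒫 s).Countable := by
  intro h
  have hle : (2 : Cardinal) ^ #s ≤ ℵ₀ := by
    rw [← mk_powerset]
    exact mk_le_aleph0_iff.mpr h.to_subtype
  exact (cantor ℵ₀).not_ge <|
    (power_le_power_left two_ne_zero (infinite_iff.mp hs.to_subtype)).trans hle

theorem Set.Countable.subfieldClosure {K : Type*} [DivisionRing K] {s : Set K}
    (hs : s.Countable) : (Subfield.closure s : Set K).Countable := by
  have := hs.to_subtype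
  exact Set.countable_coe_iff.mp <| mk_le_aleph0_iff.mp <|
    (Subfield.cardinalMk_closure_le_max s).trans (max_le mk_le_aleph0 le_rfl)

namespace HahnSeries

theorem single_mem_of_forall_single_one_mem {Γ S : Type*} [PartialOrder Γ] {n : ℕ} [NeZero n]
    [SetLike S (HahnSeries Γ (ZMod n))] [AddSubmonoidClass S (HahnSeries Γ (ZMod n))] {K : S}
    (hK : ∀ g, single g 1 ∈ K) (g : Γ) (α : ZMod n) : single g α ∈ K := by
  have hsingle : single g α = α.val • single g (1 : ZMod n) := by
    change single.addMonoidHom g α = α.val • single.addMonoidHom g 1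
    rw [← map_nsmul, nsmul_one, ZMod.natCast_zmod_val]
  exact hsingle ▸ nsmul_mem (hK g) α.val

section OfPowerSeriesMultiples

variable {Γ R : Type*} [AddCommMonoid Γ] [LinearOrder Γ] [IsOrderedCancelAddMonoid Γ]
  [Semiring R] {g : Γ}

theorem strictMono_multiplesHom (hg : 0 < g) : StrictMono (multiplesHom Γ g) :=
  nsmul_left_strictMono hg

/-- The substitution `X ↦ single g 1`, which moves the coefficient of `X ^ n` to `n • g`. -/
noncomputable def ofPowerSeriesMultiples (hg : 0 < g) : PowerSeries R →+* HahnSeries Γ R :=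
  (embDomainRingHom (multiplesHom Γ g) (strictMono_multiplesHom hg).injective
    fun _ _ => (strictMono_multiplesHom hg).le_iff_le).comp toPowerSeries.symm.toRingHom

theorem coeff_ofPowerSeriesMultiples_nsmul (hg : 0 < g) (x : PowerSeries R) (n : ℕ) :
    (ofPowerSeriesMultiples hg x).coeff (n • g) = PowerSeries.coeff n x :=
  embDomain_coeff (f := ⟨⟨multiplesHom Γ g, _⟩, _⟩) (a := n)

theorem ofPowerSeriesMultiples_X (hg : 0 < g) :
    ofPowerSeriesMultiples hg (PowerSeries.X : PowerSeries R) = single g 1 := by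
  have hX : toPowerSeries.symm (PowerSeries.X : PowerSeries R) = single 1 1 := by
    ext n
    simp [PowerSeries.coeff_X, coeff_single]
  rw [ofPowerSeriesMultiples, RingHom.comp_apply, RingEquiv.toRingHom_eq_coe,
    RingEquiv.coe_toRingHom, hX, embDomainRingHom_apply, embDomain_single]
  simp

end OfPowerSeriesMultiples

section Geometric

variable {Γ R : Type*} [AddCommGroup Γ] [LinearOrder Γ] [IsOrderedAddMonoid Γ] [Field R] {g : Γ}

theorem coeff_inv_one_sub_single_nsmul (hg : 0 < g) (n : ℕ) :
    ((1 - single g 1 : HahnSeries Γ R)⁻¹).coeff (n • g) = 1 := by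
  have hgeom : ofPowerSeriesMultiples hg (PowerSeries.mk 1) =
      (1 - single g 1 : HahnSeries Γ R)⁻¹ := by
    refine eq_inv_of_mul_eq_one_left ?_
    rw [← ofPowerSeriesMultiples_X hg, ← map_one (ofPowerSeriesMultiples hg), ← map_sub,
      ← map_mul, PowerSeries.mk_one_mul_one_sub_eq_one, map_one]
  rw [← hgeom, coeff_ofPowerSeriesMultiples_nsmul, PowerSeries.coeff_mk, Pi.one_apply]

theorem support_inv_one_sub_single_infinite (hg : 0 < g) :
    ((1 - single g 1 : HahnSeries Γ R)⁻¹).support.Infinite :=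
  Set.infinite_of_injective_forall_mem (strictMono_multiplesHom hg).injective fun n => by
    simp [coeff_inv_one_sub_single_nsmul hg]

end Geometric

end HahnSeries

/-- Let `G` be a countable nontrivial ordered abelian group and let
`K = 𝔽₂(t^g : g ∈ G)` be the subfield of `𝔽₂((G))` generated by all monomials. Then `K` is
a Hahn field in `𝔽₂((G))` (it contains all monomials `α t^g`), but the family
`F = {supp a : a ∈ K}` does not satisfy (S2) closure under subsets; hence `K` is a Hahn
field that is not a Rayner field. -/
theorem hahnField_not_rayner
    {G : Type*} [AddCommGroup G] [LinearOrder G] [IsOrderedAddMonoid G] [Countable G] (hG : ∃ g : G, g ≠ 0) :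
    (∀ (α : ZMod 2) (g : G), HahnSeries.single g α ∈
      Subfield.closure {x : HahnSeries G (ZMod 2) | ∃ g : G, x = HahnSeries.single g 1}) ∧
    ¬ (∀ A ∈ {S : Set G | ∃ a ∈ Subfield.closure
          {x : HahnSeries G (ZMod 2) | ∃ g : G, x = HahnSeries.single g 1}, a.support = S},
        ∀ B ⊆ A, B ∈ {S : Set G | ∃ a ∈ Subfield.closure
          {x : HahnSeries G (ZMod 2) | ∃ g : G, x = HahnSeries.single g 1}, a.support = S}) := by
  set K := Subfield.closure {x : HahnSeries G (ZMod 2) | ∃ g : G, x = single g 1}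
  have hK : ∀ g : G, single g 1 ∈ K := fun g => Subfield.subset_closure ⟨g, rfl⟩
  refine ⟨fun α g => single_mem_of_forall_single_one_mem hK g α, fun hS2 => ?_⟩
  obtain ⟨g₀, hg₀⟩ := hG
  have hg : 0 < |g₀| := abs_pos.mpr hg₀
  set a : HahnSeries G (ZMod 2) := (1 - single |g₀| 1)⁻¹
  have haK : a ∈ K := inv_mem (sub_mem (one_mem K) (hK _))
  have hKcount : (K : Set (HahnSeries G (ZMod 2))).Countable :=
    ((Set.countable_range fun g : G => single g (1 : ZMod 2)).mono
      (by rintro _ ⟨g, rfl⟩; exact ⟨g, rfl⟩)).subfieldClosure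
  have hsub : 𝒫 a.support ⊆ support '' (K : Set (HahnSeries G (ZMod 2))) :=
    fun B hB => hS2 a.support ⟨a, haK, rfl⟩ B hB
  exact (support_inv_one_sub_single_infinite hg).not_countable_powerset
    ((hKcount.image support).mono hsub)
end
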